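/- Let X be a finite set, let t > 0 be a real number, and let L₁, …, L_N be subsets of X with |L_i| ≥ t for every i ∈ [N]. Suppose that each element of X belongs to at most s of the sets L₁, …, L_N, where s is a positive integer, and let k be a positive integer with N ≥ s·k. Then there exist indices i₁, …, i_k ∈ [N] such that |L_{i₁} ∪ ⋯ ∪ L_{i_k}| ≥ k·t/2. -/
import Mathlib


/-- Combinatorial core of Claim 1: if `L₁, …, L_N` are subsets of a finite set
`X`, each of size at least `t`, every element of `X` lies in at most `s` of the
sets, and `N ≥ s·k`, then some `k` of the sets have union of size at least
`k·t/2`. -/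
theorem union_of_cells (X : Type*) [Fintype X] [DecidableEq X]
    (t : ℝ) (ht : 0 < t) (N s k : ℕ) (hs : 0 < s) (hk : 0 < k)
    (hN : s * k ≤ N) (L : Fin N → Finset X)
    (hsize : ∀ i : Fin N, t ≤ ((L i).card : ℝ))
    (hdeg : ∀ x : X, {i : Fin N | x ∈ L i}.ncard ≤ s) :
    ∃ f : Fin k → Fin N, Function.Injective f ∧
      (k : ℝ) * t / 2 ≤ ((Finset.univ.biUnion fun j : Fin k => L (f j)).card : ℝ) := by
  have hkN : k ≤ N := le_trans (Nat.le_mul_of_pos_left k hs) hN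
  have main : ∀ j, j ≤ k → ∃ S : Finset (Fin N), S.card = j ∧
      (j : ℝ) * t / 2 ≤ ((S.biUnion L).card : ℝ) := by
    intro j
    induction j with
    | zero => exact fun _ => ⟨∅, by simp⟩
    | succ j ih =>
      intro hj
      obtain ⟨S, hScard, hScount⟩ := ih (le_trans (Nat.le_succ j) hj)
      set U := S.biUnion L with hU
      have hjN : S.card < N := by
        rw [hScard]; exact lt_of_lt_of_le (Nat.lt_of_succ_le hj) hkN
      by_cases hbig : (k : ℝ) * t / 2 ≤ (U.card : ℝ)
      · have hne : S ≠ Finset.univ := by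
          intro h
          rw [h, Finset.card_univ, Fintype.card_fin] at hjN
          exact lt_irrefl _ hjN
        have hcompl : Sᶜ.Nonempty := by
          rw [← Finset.card_pos, Finset.card_compl, Fintype.card_fin]
          omega
        obtain ⟨i, hi⟩ := hcompl
        have hiS : i ∉ S := Finset.mem_compl.mp hi
        refine ⟨insert i S, by rw [Finset.card_insert_of_notMem hiS, hScard], ?_⟩
        have hsub : U ⊆ (insert i S).biUnion L := by
          apply Finset.biUnion_subset_biUnion_of_subset_left
          exact Finset.subset_insert i S
        have hle : (U.card : ℝ) ≤ (((insert i S).biUnion L).card : ℝ) := by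
          exact_mod_cast Finset.card_le_card hsub
        refine le_trans ?_ (le_trans hbig hle)
        have : ((j : ℝ) + 1) ≤ (k : ℝ) := by exact_mod_cast hj
        push_cast
        nlinarith
      · push_neg at hbig
        -- counting argument
        set B := Finset.univ.filter (fun i : Fin N => t / 2 ≤ ((L i ∩ U).card : ℝ)) with hB
        have hsum_eq : ∑ i : Fin N, ((L i ∩ U).card : ℕ) =
            ∑ x ∈ U, (Finset.univ.filter (fun i : Fin N => x ∈ L i)).card := by
          have h1 : ∀ i : Fin N, (L i ∩ U).card = (U.filter (fun x => x ∈ L i)).card := by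
            intro i
            congr 1
            ext x
            simp [Finset.mem_inter, Finset.mem_filter, and_comm]
          simp_rw [h1, Finset.card_filter]
          rw [Finset.sum_comm]
        have hdeg' : ∀ x : X, (Finset.univ.filter (fun i : Fin N => x ∈ L i)).card ≤ s := by
          intro x
          have := hdeg x
          rwa [Set.ncard_eq_toFinset_card', Set.toFinset_setOf] at this
        have hsum_le : (∑ i : Fin N, ((L i ∩ U).card : ℝ)) ≤ (s : ℝ) * (U.card : ℝ) := by
          have : ∑ i : Fin N, ((L i ∩ U).card : ℕ) ≤ s * U.card := by
            rw [hsum_eq]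
            calc ∑ x ∈ U, (Finset.univ.filter (fun i : Fin N => x ∈ L i)).card
                ≤ ∑ _x ∈ U, s := Finset.sum_le_sum (fun x _ => hdeg' x)
              _ = U.card * s := by rw [Finset.sum_const, smul_eq_mul]
              _ = s * U.card := Nat.mul_comm _ _
          exact_mod_cast this
        have hBlb : t / 2 * (B.card : ℝ) ≤ ∑ i : Fin N, ((L i ∩ U).card : ℝ) := by
          calc t / 2 * (B.card : ℝ) = ∑ _i ∈ B, t / 2 := by
                rw [Finset.sum_const, nsmul_eq_mul, mul_comm]
            _ ≤ ∑ i ∈ B, ((L i ∩ U).card : ℝ) := by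
                apply Finset.sum_le_sum
                intro i hi
                exact (Finset.mem_filter.mp hi).2
            _ ≤ ∑ i : Fin N, ((L i ∩ U).card : ℝ) := by
                apply Finset.sum_le_sum_of_subset_of_nonneg (Finset.subset_univ B)
                intro i _ _
                positivity
        have hBcard : (B.card : ℝ) < (N : ℝ) := by
          have h1 : t / 2 * (B.card : ℝ) < t / 2 * (N : ℝ) := by
            have hsk : (s : ℝ) * ((k : ℝ) * t / 2) ≤ (N : ℝ) * (t / 2) := by
              have : (s : ℝ) * (k : ℝ) ≤ (N : ℝ) := by exact_mod_cast hN
              nlinarith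
            have h2 : (s : ℝ) * (U.card : ℝ) < (s : ℝ) * ((k : ℝ) * t / 2) := by
              apply mul_lt_mul_of_pos_left hbig
              exact_mod_cast hs
            calc t / 2 * (B.card : ℝ) ≤ ∑ i : Fin N, ((L i ∩ U).card : ℝ) := hBlb
              _ ≤ (s : ℝ) * (U.card : ℝ) := hsum_le
              _ < (s : ℝ) * ((k : ℝ) * t / 2) := h2
              _ ≤ (N : ℝ) * (t / 2) := hsk
              _ = t / 2 * (N : ℝ) := mul_comm _ _
          exact lt_of_mul_lt_mul_left h1 (by positivity)
        have hBN : B.card < N := by exact_mod_cast hBcard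
        have hBne : B ≠ Finset.univ := by
          intro h
          rw [h, Finset.card_univ, Fintype.card_fin] at hBN
          exact lt_irrefl _ hBN
        have hcompl : Bᶜ.Nonempty := by
          rw [← Finset.card_pos, Finset.card_compl, Fintype.card_fin]
          omega
        obtain ⟨i, hi⟩ := hcompl
        have hiB : i ∉ B := Finset.mem_compl.mp hi
        have hiS : i ∉ S := by
          intro hiS
          apply hiB
          rw [hB, Finset.mem_filter]
          refine ⟨Finset.mem_univ i, ?_⟩
          have hsub : L i ⊆ U := Finset.subset_biUnion_of_mem L hiS
          rw [Finset.inter_eq_left.mpr hsub]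
          linarith [hsize i]
        have hiInt : ((L i ∩ U).card : ℝ) < t / 2 := by
          by_contra h
          push_neg at h
          exact hiB (Finset.mem_filter.mpr ⟨Finset.mem_univ i, h⟩)
        refine ⟨insert i S, by rw [Finset.card_insert_of_notMem hiS, hScard], ?_⟩
        rw [Finset.biUnion_insert]
        have hcards : ((L i ∪ U).card : ℝ) + ((L i ∩ U).card : ℝ)
            = ((L i).card : ℝ) + (U.card : ℝ) := by
          exact_mod_cast Finset.card_union_add_card_inter (L i) U
        have := hsize i
        push_cast
        linarith
  obtain ⟨S, hScard, hScount⟩ := main k le_rfl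
  refine ⟨fun j => (S.orderIsoOfFin hScard j : Fin N), ?_, ?_⟩
  · intro a b h
    exact (S.orderIsoOfFin hScard).injective (Subtype.ext h)
  · have himg : Finset.univ.image (fun j => ((S.orderIsoOfFin hScard j : Fin N))) = S := by
      apply Finset.eq_of_subset_of_card_le
      · intro x hx
        simp only [Finset.mem_image] at hx
        obtain ⟨j, _, rfl⟩ := hx
        exact (S.orderIsoOfFin hScard j).2
      · rw [hScard, Finset.card_image_of_injective _
          (fun a b h => (S.orderIsoOfFin hScard).injective (Subtype.ext h))]
        simp
    have : (Finset.univ.biUnion fun j : Fin k => L ((S.orderIsoOfFin hScard j : Fin N)))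
        = S.biUnion L := by
      ext x
      simp only [Finset.mem_biUnion, Finset.mem_univ, true_and]
      constructor
      · rintro ⟨j, hx⟩
        exact ⟨_, (S.orderIsoOfFin hScard j).2, hx⟩
      · rintro ⟨i, hi, hx⟩
        refine ⟨(S.orderIsoOfFin hScard).symm ⟨i, hi⟩, ?_⟩
        rw [OrderIso.apply_symm_apply]
        exact hx
    have h2 : ((Finset.univ.biUnion fun j : Fin k => L ((S.orderIsoOfFin hScard j : Fin N))).card : ℝ)
        = ((S.biUnion L).card : ℝ) := by rw [this]
    rw [h2]
    exact hScount
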